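/- Fix a vector x ∈ ℝᵈ whose last coordinate is x_d, a scalar w < 0, and consider the softmax s(v) = softmax(v) evaluated at logits v = x_d·w·x ∈ ℝᵈ. If x is distributed as N(0, σ'²·I_d), then for every index k ∈ [d−1], E[softmax_d(x_d·w·x)] ≤ E[softmax_k(x_d·w·x)], i.e., the expected softmax weight on the last coordinate is at most that on any other coordinate. -/

import Mathlib

open ProbabilityTheory MeasureTheory

lemma key_ineq (C r t : ℝ) (hr0 : 0 < r) (hr1 : r ≤ 1) (hrC : r ≤ C) :
    r / (C + Real.exp t) + r / (C + Real.exp (-t)) ≤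
      Real.exp t / (C + Real.exp t) + Real.exp (-t) / (C + Real.exp (-t)) := by
  set a := Real.exp t with ha
  set a' := Real.exp (-t) with ha'
  have haa : a * a' = 1 := by rw [ha, ha', ← Real.exp_add]; simp
  have ha0 : 0 < a := Real.exp_pos t
  have ha0' : 0 < a' := Real.exp_pos (-t)
  have hu : 2 ≤ a + a' := by nlinarith [sq_nonneg (a - a')]
  have hD1 : 0 < C + a := by linarith
  have hD2 : 0 < C + a' := by linarith
  rw [div_add_div _ _ (ne_of_gt hD1) (ne_of_gt hD2), div_add_div _ _ (ne_of_gt hD1) (ne_of_gt hD2),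
    div_le_div_iff₀ (by positivity) (by positivity)]
  nlinarith [mul_pos hD1 hD2, mul_nonneg (sub_nonneg.2 hrC) (sub_nonneg.2 hu),
    mul_nonneg (sub_nonneg.2 hr1) (le_of_lt (add_pos (lt_of_lt_of_le hr0 hrC) one_pos))]

section aux
variable {d : ℕ} (w : ℝ)

/-- softmax coordinate function -/
noncomputable def smx (w : ℝ) (i : Fin (d + 1)) (x : Fin (d + 1) → ℝ) : ℝ :=
  Real.exp (x (Fin.last d) * w * x i) / ∑ j, Real.exp (x (Fin.last d) * w * x j)

lemma smx_meas (i : Fin (d + 1)) : Measurable (smx w i) := by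
  apply Measurable.div
  · fun_prop
  · exact Finset.measurable_sum _ fun j _ => by fun_prop

lemma smx_nonneg (i : Fin (d + 1)) (x : Fin (d + 1) → ℝ) : 0 ≤ smx w i x := by
  apply div_nonneg (Real.exp_nonneg _)
  exact Finset.sum_nonneg fun j _ => Real.exp_nonneg _

lemma smx_le_one (i : Fin (d + 1)) (x : Fin (d + 1) → ℝ) : smx w i x ≤ 1 := by
  have hpos : (0:ℝ) < ∑ j, Real.exp (x (Fin.last d) * w * x j) :=
    Finset.sum_pos (fun j _ => Real.exp_pos _) ⟨i, Finset.mem_univ i⟩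
  rw [smx, div_le_one hpos]
  exact Finset.single_le_sum (f := fun j => Real.exp (x (Fin.last d) * w * x j))
    (fun j _ => Real.exp_nonneg _) (Finset.mem_univ i)

lemma smx_integrable (i : Fin (d + 1)) (ν : Measure (Fin (d + 1) → ℝ))
    [IsProbabilityMeasure ν] : Integrable (smx w i) ν := by
  refine (integrable_const (1:ℝ)).mono' (smx_meas w i).aestronglyMeasurable ?_
  refine Filter.Eventually.of_forall fun x => ?_
  rw [Real.norm_eq_abs, abs_of_nonneg (smx_nonneg w i x)]
  exact smx_le_one w i x

end aux

set_option maxHeartbeats 1000000 in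
open ProbabilityTheory MeasureTheory in
theorem attention_fails_residual_feature {Ω : Type*} [MeasureSpace Ω]
    [IsProbabilityMeasure (ℙ : Measure Ω)] {d : ℕ} (σ' : NNReal) (w : ℝ)
    (hw : w < 0) (X : Ω → Fin (d + 1) → ℝ)
    (hmeas : ∀ i, Measurable fun ω => X ω i)
    (hindep : iIndepFun (fun i ω => X ω i) ℙ)
    (hlaw : ∀ i, Measure.map (fun ω => X ω i) ℙ = gaussianReal 0 (σ' ^ 2)) :
    ∀ k : Fin (d + 1), k ≠ Fin.last d →
      (∫ ω, Real.exp (X ω (Fin.last d) * w * X ω (Fin.last d)) /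
          (∑ j, Real.exp (X ω (Fin.last d) * w * X ω j)) ∂ℙ) ≤
        ∫ ω, Real.exp (X ω (Fin.last d) * w * X ω k) /
          (∑ j, Real.exp (X ω (Fin.last d) * w * X ω j)) ∂ℙ := by
  intro k hk
  set ν : Measure (Fin (d + 1) → ℝ) :=
    Measure.pi (fun _ => gaussianReal 0 (σ' ^ 2)) with hν
  have hXmeas : Measurable (fun ω => X ω) := measurable_pi_lambda _ hmeas
  -- joint law is the product of Gaussians
  have h1 : Measure.map (fun ω => X ω) ℙ = ν := by
    refine (Measure.pi_eq fun s hs => ?_).symm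
    rw [Measure.map_apply hXmeas (MeasurableSet.univ_pi hs)]
    have hpre : (fun ω => X ω) ⁻¹' Set.pi Set.univ s
        = ⋂ i ∈ Finset.univ, (fun ω => X ω i) ⁻¹' s i := by
      ext ω; simp [Set.mem_pi]
    rw [hpre, hindep.measure_inter_preimage_eq_mul Finset.univ (fun i _ => hs i)]
    refine Finset.prod_congr rfl fun i _ => ?_
    rw [← hlaw i, Measure.map_apply (hmeas i) (hs i)]
  -- the flip map
  set flip : (Fin (d + 1) → ℝ) → (Fin (d + 1) → ℝ) :=
    fun x i => if i = k then -(x i) else x i with hflipdef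
  have hflipmeas : Measurable flip := by
    refine measurable_pi_lambda _ fun i => ?_
    by_cases h : i = k
    · simp only [hflipdef, if_pos h]
      exact (measurable_pi_apply i).neg
    · simp only [hflipdef, if_neg h]
      exact measurable_pi_apply i
  have hneg : Measure.map (fun x : ℝ => -x) (gaussianReal 0 (σ' ^ 2))
      = gaussianReal 0 (σ' ^ 2) := by
    have := gaussianReal_map_const_mul (μ := 0) (v := σ' ^ 2) (-1)
    simp only [neg_one_mul, mul_zero] at this
    rw [this]
    congr 1
    rw [show (NNReal.mk ((-1:ℝ)^2) (sq_nonneg _)) = 1 by ext; simp, one_mul]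
  have h2 : Measure.map flip ν = ν := by
    refine (Measure.pi_eq fun s hs => ?_).symm
    rw [Measure.map_apply hflipmeas (MeasurableSet.univ_pi hs)]
    have hpre : flip ⁻¹' Set.pi Set.univ s
        = Set.pi Set.univ (fun i => if i = k then (fun a : ℝ => -a) ⁻¹' s i else s i) := by
      ext x
      simp only [Set.mem_pi, Set.mem_univ, forall_true_left, Set.mem_preimage, hflipdef]
      constructor
      · intro h i; by_cases hi : i = k
        · simpa [hi] using h i
        · simpa [hi] using h i
      · intro h i; by_cases hi : i = k
        · simpa [hi] using h i
        · simpa [hi] using h i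
    rw [hpre, hν, Measure.pi_pi]
    refine Finset.prod_congr rfl fun i _ => ?_
    by_cases hi : i = k
    · simp only [hi, if_true]
      conv_rhs => rw [← hneg]
      rw [Measure.map_apply measurable_neg (hs k)]
    · simp [hi]
  have hprob : IsProbabilityMeasure ν := by rw [hν]; infer_instance
  -- transfer to ν
  have hint : ∀ i : Fin (d + 1),
      (∫ ω, Real.exp (X ω (Fin.last d) * w * X ω i) /
        (∑ j, Real.exp (X ω (Fin.last d) * w * X ω j)) ∂ℙ) = ∫ x, smx w i x ∂ν := by
    intro i
    rw [← h1, integral_map hXmeas.aemeasurable (smx_meas w i).aestronglyMeasurable]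
    rfl
  rw [hint (Fin.last d), hint k]
  -- use the flip symmetry
  have hcomp : ∀ i : Fin (d + 1), ∫ x, smx w i (flip x) ∂ν = ∫ x, smx w i x ∂ν := by
    intro i
    conv_rhs => rw [← h2]
    rw [integral_map hflipmeas.aemeasurable (smx_meas w i).aestronglyMeasurable]
  have hflint : ∀ i : Fin (d + 1), Integrable (fun x => smx w i (flip x)) ν := by
    intro i
    refine (integrable_const (1:ℝ)).mono'
      ((smx_meas w i).comp hflipmeas).aestronglyMeasurable ?_
    refine Filter.Eventually.of_forall fun x => ?_
    rw [Real.norm_eq_abs, abs_of_nonneg (smx_nonneg w i _)]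
    exact smx_le_one w i _
  have hintg : ∀ i : Fin (d + 1), Integrable (fun x => smx w i x + smx w i (flip x)) ν := by
    intro i
    exact (smx_integrable w i ν).add (hflint i)
  -- pointwise inequality
  have hpt : ∀ x : Fin (d + 1) → ℝ,
      smx w (Fin.last d) x + smx w (Fin.last d) (flip x) ≤ smx w k x + smx w k (flip x) := by
    intro x
    set L := x (Fin.last d) with hL
    have hflip_last : flip x (Fin.last d) = L := by
      simp only [hflipdef, if_neg (Ne.symm hk)]; rfl
    have hflip_k : flip x k = -(x k) := by simp only [hflipdef, if_pos rfl]
    have hflip_ne : ∀ j, j ≠ k → flip x j = x j := fun j hj => by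
      simp only [hflipdef, if_neg hj]
    set t := L * w * x k with ht
    set C : ℝ := ∑ j ∈ Finset.univ.erase k, Real.exp (L * w * x j) with hC
    have hsum1 : (∑ j, Real.exp (L * w * x j)) = C + Real.exp t := by
      rw [hC, Finset.sum_erase_add Finset.univ _ (Finset.mem_univ k)]
    have hsum2 : (∑ j, Real.exp (flip x (Fin.last d) * w * flip x j)) = C + Real.exp (-t) := by
      rw [← Finset.sum_erase_add Finset.univ _ (Finset.mem_univ k)]
      congr 1
      · refine Finset.sum_congr rfl fun j hj => ?_
        rw [hflip_last, hflip_ne j (Finset.mem_erase.mp hj).1]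
      · rw [hflip_last, hflip_k, ht]; ring_nf
    have hr1 : Real.exp (L * w * L) ≤ 1 := by
      rw [Real.exp_le_one_iff]
      nlinarith [sq_nonneg L]
    have hrC : Real.exp (L * w * L) ≤ C := by
      rw [hC]
      refine Finset.single_le_sum (f := fun j => Real.exp (L * w * x j))
        (fun j _ => Real.exp_nonneg _) ?_
      exact Finset.mem_erase.mpr ⟨Ne.symm hk, Finset.mem_univ _⟩
    have hkey := key_ineq C (Real.exp (L * w * L)) t (Real.exp_pos _) hr1 hrC
    have e1 : smx w (Fin.last d) x = Real.exp (L * w * L) / (C + Real.exp t) := by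
      rw [smx, ← hL, hsum1]
    have e2 : smx w (Fin.last d) (flip x) = Real.exp (L * w * L) / (C + Real.exp (-t)) := by
      rw [smx, hsum2, hflip_last]
    have e3 : smx w k x = Real.exp t / (C + Real.exp t) := by rw [smx, ← hL, ← ht, hsum1]
    have e4 : smx w k (flip x) = Real.exp (-t) / (C + Real.exp (-t)) := by
      rw [smx, hsum2, hflip_last, hflip_k]
      congr 2
      rw [ht]; ring
    rw [e1, e2, e3, e4]
    exact hkey
  have hmono : ∫ x, (smx w (Fin.last d) x + smx w (Fin.last d) (flip x)) ∂ν
      ≤ ∫ x, (smx w k x + smx w k (flip x)) ∂ν :=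
    integral_mono (hintg _) (hintg _) hpt
  rw [integral_add (smx_integrable w _ ν) (hflint _),
    integral_add (smx_integrable w _ ν) (hflint _), hcomp, hcomp] at hmono
  linarith
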